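/- arXiv:1605.00372 — 2 statements merged into one kernel-verified Lean document; each statement's English description precedes it below -/
import Mathlib

section
/- Let H be a connected finite simple block graph and let B be a block of H with vertex set V(B) = {u_1, u_2, …, u_k}. For each 1 ≤ i ≤ k, let G_i denote the connected component containing u_i of the subgraph of H induced by (V(H) ∖ V(B)) ∪ {u_i}, and for S ⊆ V(H) write S_i = S ∩ V(G_i). Suppose S ⊆ V(H) ∖ {u_1} is a dominating set of the graph H − u_1, no vertex of S is adjacent to u_1 in H, and the induced subgraph H[S] has a perfect matching. Then S ∩ V(B) = ∅; the set S_1 dominates every vertex of V(G_1) ∖ ({u_1} ∪ S_1), no vertex of S_1 is adjacent to u_1, and G_1[S_1] has a perfect matching; and for each 2 ≤ i ≤ k, the set S_i is a paired-dominating set of G_i with u_i ∉ S_i. -/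
open SimpleGraph

variable {V : Type*}

/-- `S` is a dominating set of `G`. -/
def Dominating (G : SimpleGraph V) (S : Set V) : Prop :=
  ∀ v ∉ S, ∃ u ∈ S, G.Adj v u

/-- Within the subgraph of `G` induced by `A` (for `S ⊆ A`), the set `S` dominates
every vertex of `A \ S`. -/
def DominatingOn (G : SimpleGraph V) (A S : Set V) : Prop :=
  ∀ v ∈ A, v ∉ S → ∃ w ∈ S, G.Adj v w

/-- The induced subgraph `G[S]` has a perfect matching, i.e. there is a matching of `G`
whose vertex set is exactly `S`. -/
def HasPerfectMatchingOn (G : SimpleGraph V) (S : Set V) : Prop :=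
  ∃ M : G.Subgraph, M.verts = S ∧ M.IsMatching

/-- `S` is a paired-dominating set of `G`. -/
def PairedDominating (G : SimpleGraph V) (S : Set V) : Prop :=
  Dominating G S ∧ HasPerfectMatchingOn G S

/-- `v` is a cut vertex: deleting it disconnects the graph. -/
def IsCutVertex (G : SimpleGraph V) (v : V) : Prop :=
  ¬ (G.induce ({v}ᶜ : Set V)).Preconnected

/-- The graph has no cut vertex. -/
def HasNoCutVertex (G : SimpleGraph V) : Prop :=
  ∀ v : V, ¬ IsCutVertex G v

/-- `B` is a block of `G`: a maximal vertex set inducing a connected subgraph with no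
cut vertex. -/
def IsBlock (G : SimpleGraph V) (B : Set V) : Prop :=
  (G.induce B).Connected ∧ HasNoCutVertex (G.induce B) ∧
    ∀ B' : Set V, B ⊆ B' → (G.induce B').Connected → HasNoCutVertex (G.induce B') → B' = B

/-- `G` is a block graph: every block is a complete subgraph. -/
def IsBlockGraph (G : SimpleGraph V) : Prop :=
  ∀ B : Set V, IsBlock G B → B.Pairwise G.Adj

/-- The vertex set of the connected component containing `u` of the subgraph of `G`
induced by `A`. -/
def componentOf (G : SimpleGraph V) (A : Set V) (u : V) : Set V :=
  {v | ∃ (hu : u ∈ A) (hv : v ∈ A), (G.induce A).Reachable ⟨u, hu⟩ ⟨v, hv⟩}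

/-!
Since `B` is a clique containing `u₁` and no vertex of `S` is `u₁` or adjacent to it, `S` misses
`B`. Every component `G_i` is then closed under moving along an edge into `S`: such an edge ends
outside `B`, so it stays inside `(V(H) ∖ V(B)) ∪ {u_i}`. Hence a dominator or matching partner of
a vertex of `G_i` lies in `S_i`, and both domination and the perfect matching restrict to `S_i`.
-/

section

variable {G : SimpleGraph V}

theorem SimpleGraph.IsClique.disjoint_of_forall_not_adj {B S : Set V} {u : V} (hB : G.IsClique B)
    (huB : u ∈ B) (huS : u ∉ S) (hnadj : ∀ w ∈ S, ¬ G.Adj u w) : Disjoint S B := by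
  refine Set.disjoint_left.mpr fun b hbS hbB => ?_
  have hbu : u ≠ b := fun h => huS (h ▸ hbS)
  exact hnadj b hbS (hB huB hbB hbu)

theorem mem_componentOf_of_adj {A : Set V} {u x y : V} (hx : x ∈ componentOf G A u)
    (hy : y ∈ A) (hxy : G.Adj x y) : y ∈ componentOf G A u := by
  obtain ⟨hu, hxA, hreach⟩ := hx
  have hxy' : (G.induce A).Adj ⟨x, hxA⟩ ⟨y, hy⟩ := hxy
  exact ⟨hu, hy, hreach.trans hxy'.reachable⟩

theorem notMem_componentOf_compl_union {B : Set V} {v w : V} (hvB : v ∈ B) (hvw : v ≠ w) :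
    v ∉ componentOf G (Bᶜ ∪ {w}) w := by
  rintro ⟨-, hv | hv, -⟩
  · exact hv hvB
  · exact hvw hv

theorem DominatingOn.inter_of_adj_closed {A C S : Set V} (hdom : DominatingOn G A S)
    (hC : ∀ x ∈ C, ∀ y ∈ S, G.Adj x y → y ∈ C) : DominatingOn G (A ∩ C) (S ∩ C) := by
  intro v ⟨hvA, hvC⟩ hvS
  obtain ⟨w, hwS, hvw⟩ := hdom v hvA fun h => hvS ⟨h, hvC⟩
  exact ⟨w, ⟨hwS, hC v hvC w hwS hvw⟩, hvw⟩

theorem HasPerfectMatchingOn.inter_of_adj_closed {C S : Set V} (hpm : HasPerfectMatchingOn G S)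
    (hC : ∀ x ∈ C, ∀ y ∈ S, G.Adj x y → y ∈ C) : HasPerfectMatchingOn G (S ∩ C) := by
  obtain ⟨M, rfl, hM⟩ := hpm
  refine ⟨M.induce (M.verts ∩ C), rfl, fun v hv => ?_⟩
  obtain ⟨w, hvw, huniq⟩ := hM hv.1
  have hw : w ∈ M.verts ∩ C := ⟨hvw.snd_mem, hC v hv.2 w hvw.snd_mem (M.adj_sub hvw)⟩
  exact ⟨w, ⟨hv, hw, hvw⟩, fun y hy => huniq y hy.2.2⟩

end

theorem stmt_11_general {V : Type*} (H : SimpleGraph V)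
    (hbg : IsBlockGraph H) (B : Set V) (hB : IsBlock H B)
    (k : ℕ) (hk : 0 < k) (u : Fin k → V) (huinj : Function.Injective u)
    (hurange : Set.range u = B)
    (G' : Fin k → Set V) (hG' : ∀ i : Fin k, G' i = componentOf H (Bᶜ ∪ {u i}) (u i))
    (S : Set V) (hSsub : S ⊆ ({u ⟨0, hk⟩}ᶜ : Set V))
    (hdom : DominatingOn H ({u ⟨0, hk⟩}ᶜ : Set V) S)
    (hnadj : ∀ w ∈ S, ¬ H.Adj (u ⟨0, hk⟩) w)
    (hpm : HasPerfectMatchingOn H S) :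
    S ∩ B = ∅ ∧
      (∀ v ∈ G' ⟨0, hk⟩, v ∉ S ∩ G' ⟨0, hk⟩ → v ≠ u ⟨0, hk⟩ →
        ∃ w ∈ S ∩ G' ⟨0, hk⟩, H.Adj v w) ∧
      (∀ w ∈ S ∩ G' ⟨0, hk⟩, ¬ H.Adj (u ⟨0, hk⟩) w) ∧
      HasPerfectMatchingOn H (S ∩ G' ⟨0, hk⟩) ∧
      (∀ i : Fin k, i ≠ ⟨0, hk⟩ →
        DominatingOn H (G' i) (S ∩ G' i) ∧
          HasPerfectMatchingOn H (S ∩ G' i) ∧ u i ∉ S ∩ G' i) := by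
  have hu_mem (i : Fin k) : u i ∈ B := hurange ▸ ⟨i, rfl⟩
  have hSB : Disjoint S B :=
    IsClique.disjoint_of_forall_not_adj (hbg B hB) (hu_mem _) (fun h => hSsub h rfl) hnadj
  have hclosed (i : Fin k) : ∀ x ∈ G' i, ∀ y ∈ S, H.Adj x y → y ∈ G' i := by
    intro x hx y hy hxy
    rw [hG'] at hx ⊢
    exact mem_componentOf_of_adj hx (Or.inl (hSB.notMem_of_mem_left hy)) hxy
  have hdom_i (i : Fin k) := hdom.inter_of_adj_closed (hclosed i)
  refine ⟨Set.disjoint_iff_inter_eq_empty.mp hSB,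
    fun v hv hvS hv0 => hdom_i _ v ⟨hv0, hv⟩ hvS, fun w hw => hnadj w hw.1,
    hpm.inter_of_adj_closed (hclosed _), fun i hi => ⟨fun v hv hvS => ?_,
      hpm.inter_of_adj_closed (hclosed i), fun h => hSB.notMem_of_mem_left h.1 (hu_mem i)⟩⟩
  have hv0 : v ≠ u ⟨0, hk⟩ := by
    rintro rfl
    rw [hG'] at hv
    exact notMem_componentOf_compl_union (hu_mem _) (huinj.ne (Ne.symm hi)) hv
  exact hdom_i i v ⟨hv0, hv⟩ hvS

theorem stmt_11 {V : Type*} [Fintype V] (H : SimpleGraph V) (hH : H.Connected)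
    (hbg : IsBlockGraph H) (B : Set V) (hB : IsBlock H B)
    (k : ℕ) (hk : 0 < k) (u : Fin k → V) (huinj : Function.Injective u)
    (hurange : Set.range u = B)
    (G' : Fin k → Set V) (hG' : ∀ i : Fin k, G' i = componentOf H (Bᶜ ∪ {u i}) (u i))
    (S : Set V) (hSsub : S ⊆ ({u ⟨0, hk⟩}ᶜ : Set V))
    (hdom : DominatingOn H ({u ⟨0, hk⟩}ᶜ : Set V) S)
    (hnadj : ∀ w ∈ S, ¬ H.Adj (u ⟨0, hk⟩) w)
    (hpm : HasPerfectMatchingOn H S) :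
    S ∩ B = ∅ ∧
      (∀ v ∈ G' ⟨0, hk⟩, v ∉ S ∩ G' ⟨0, hk⟩ → v ≠ u ⟨0, hk⟩ →
        ∃ w ∈ S ∩ G' ⟨0, hk⟩, H.Adj v w) ∧
      (∀ w ∈ S ∩ G' ⟨0, hk⟩, ¬ H.Adj (u ⟨0, hk⟩) w) ∧
      HasPerfectMatchingOn H (S ∩ G' ⟨0, hk⟩) ∧
      (∀ i : Fin k, i ≠ ⟨0, hk⟩ →
        DominatingOn H (G' i) (S ∩ G' i) ∧
          HasPerfectMatchingOn H (S ∩ G' i) ∧ u i ∉ S ∩ G' i) :=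
  stmt_11_general H hbg B hB k hk u huinj hurange G' hG' S hSsub hdom hnadj hpm
end

section
/- Let H be a connected finite simple block graph and let B be a block of H with vertex set V(B) = {u_1, u_2, …, u_k}. For each 1 ≤ i ≤ k, let G_i denote the connected component containing u_i of the subgraph of H induced by (V(H) ∖ V(B)) ∪ {u_i}. Suppose S_1 ⊆ V(G_1) is a dominating set of G_1 with u_1 ∈ S_1 such that G_1[S_1 ∖ {u_1}] has a perfect matching, and suppose for each 2 ≤ i ≤ k that S_i ⊆ V(G_i) dominates every vertex of V(G_i) ∖ ({u_i} ∪ S_i). Let J ⊆ {2, …, k} be such that for each i ∈ J we have u_i ∈ S_i and G_i[S_i ∖ {u_i}] has a perfect matching, and for each i ∈ {2, …, k} ∖ J the induced subgraph G_i[S_i] has a perfect matching. If |J| is even, then S = S_1 ∪ S_2 ∪ … ∪ S_k is a dominating set of H containing u_1 and H[S ∖ {u_1}] has a perfect matching. -/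
open SimpleGraph

variable {V : Type*}

/-!
The components `G' i` hanging off distinct vertices of the block `B` are disjoint: a vertex in
two of them yields a path between two vertices of `B` that leaves `B`, and adding such a path (an
ear) to a vertex set that is connected and has no cut vertex keeps both properties, contradicting
the maximality of `B`. Since `H` is connected the `G' i` also cover `H`. So `S` dominates `H`,
a root `u i` outside `S` being adjacent to `u₁` because `B` is a clique; and `S \ {u₁}` is the
disjoint union of the matched pieces `S i \ {u i}` (`i = 1` or `i ∈ J`) and `S i` (otherwise)
with the clique `{u i | i ∈ J}`, which has a perfect matching because it has even size.
-/

open Function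

variable {G : SimpleGraph V}

lemma HasPerfectMatchingOn.union {s t : Set V} (hs : HasPerfectMatchingOn G s)
    (ht : HasPerfectMatchingOn G t) (hst : Disjoint s t) : HasPerfectMatchingOn G (s ∪ t) := by
  obtain ⟨M, rfl, hM⟩ := hs
  obtain ⟨N, rfl, hN⟩ := ht
  exact ⟨M ⊔ N, rfl, hM.sup hN (by rwa [hM.support_eq_verts, hN.support_eq_verts])⟩

lemma hasPerfectMatchingOn_iUnion {ι : Type*} {s : ι → Set V}
    (hs : ∀ i, HasPerfectMatchingOn G (s i)) (hd : Pairwise (Disjoint on s)) :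
    HasPerfectMatchingOn G (⋃ i, s i) := by
  choose M hMv hM using hs
  refine ⟨⨆ i, M i, by simp [hMv], Subgraph.IsMatching.iSup hM fun i j hij => ?_⟩
  change Disjoint (M i).support (M j).support
  rw [(hM i).support_eq_verts, (hM j).support_eq_verts, hMv, hMv]
  exact hd hij

lemma SimpleGraph.IsClique.hasPerfectMatchingOn {s : Set V} (hc : G.IsClique s) (hs : s.Finite)
    (he : Even s.ncard) : HasPerfectMatchingOn G s :=
  (hc.even_iff_exists_isMatching hs).1 he

def induceComplSingletonIso (s : Set V) (x : s) :
    (G.induce s).induce ({x}ᶜ : Set s) ≃g G.induce (s \ {x.1}) where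
  toFun w := ⟨w.1.1, w.1.2, fun h => w.2 (Subtype.ext h)⟩
  invFun w := ⟨⟨w.1, w.2.1⟩, fun h => w.2.2 (congrArg Subtype.val h)⟩
  left_inv _ := rfl
  right_inv _ := rfl
  map_rel_iff' := Iff.rfl

lemma hasNoCutVertex_induce_iff {s : Set V} :
    HasNoCutVertex (G.induce s) ↔ ∀ x ∈ s, (G.induce (s \ {x})).Preconnected := by
  simp only [HasNoCutVertex, IsCutVertex, not_not, Subtype.forall]
  exact forall₂_congr fun x hx => (induceComplSingletonIso s ⟨x, hx⟩).preconnected_iff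

lemma mem_componentOf_iff {A : Set V} {a v : V} :
    v ∈ componentOf G A a ↔ ∃ p : G.Walk a v, ∀ z ∈ p.support, z ∈ A := by
  constructor
  · rintro ⟨ha, hv, ⟨p⟩⟩
    refine ⟨p.map (Embedding.induce A).toHom, fun z hz => ?_⟩
    have hz' : z ∈ (p.map (Embedding.induce A).toHom).support := hz
    rw [Walk.support_map] at hz'
    obtain ⟨w, -, rfl⟩ := List.mem_map.1 hz'
    exact w.2
  · rintro ⟨p, hp⟩
    exact ⟨hp a p.start_mem_support, hp v p.end_mem_support, ⟨p.induce A hp⟩⟩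

lemma self_mem_componentOf {A : Set V} {a : V} (ha : a ∈ A) : a ∈ componentOf G A a :=
  mem_componentOf_iff.2 ⟨Walk.nil, by simpa using ha⟩

lemma SimpleGraph.Walk.IsPath.exists_walk_avoiding {u v x y : V} {p : G.Walk u v}
    (hp : p.IsPath) (hy : y ∈ p.support) (hyx : y ≠ x) :
    ∃ e, (e = u ∨ e = v) ∧ ∃ q : G.Walk e y, x ∉ q.support ∧ q.support ⊆ p.support := by
  classical
  induction p with
  | nil =>
    rw [Walk.support_nil, List.mem_singleton] at hy
    subst hy
    exact ⟨_, Or.inl rfl, Walk.nil, by simpa using hyx.symm, List.Subset.refl _⟩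
  | @cons u c v h p ih =>
    rw [Walk.cons_isPath_iff] at hp
    rw [Walk.support_cons, List.mem_cons] at hy
    rcases hy with rfl | hy
    · exact ⟨_, Or.inl rfl, Walk.nil, by simpa using hyx.symm, by simp⟩
    by_cases hxu : x = u
    · subst hxu
      have hsub := p.support_dropUntil_subset_support hy
      refine ⟨v, Or.inr rfl, (p.dropUntil y hy).reverse, fun hx => hp.2 (hsub ?_), ?_⟩
      · simpa using hx
      · simpa using List.subset_cons_of_subset _ hsub
    · obtain ⟨e, rfl | rfl, q, hxq, hqp⟩ := ih hp.1 hy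
      · exact ⟨_, Or.inl rfl, q.cons h, by simp [hxu, hxq],
          by simpa using List.cons_subset_cons _ hqp⟩
      · exact ⟨_, Or.inr rfl, q, hxq, List.subset_cons_of_subset _ hqp⟩

lemma hasNoCutVertex_induce_union_support {s : Set V} (hs : (G.induce s).Preconnected)
    (hcut : HasNoCutVertex (G.induce s)) {a b : V} (ha : a ∈ s) (hb : b ∈ s) (hab : a ≠ b)
    {p : G.Walk a b} (hp : p.IsPath) :
    HasNoCutVertex (G.induce (s ∪ {z | z ∈ p.support})) := by
  rw [hasNoCutVertex_induce_iff] at hcut ⊢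
  intro x _
  have hsx : (G.induce (s \ {x})).Preconnected := by
    by_cases hx : x ∈ s
    · exact hcut x hx
    · rwa [Set.sdiff_singleton_eq_self hx]
  obtain ⟨c, hc⟩ : (s \ {x}).Nonempty := by
    by_cases hax : a = x
    · exact ⟨b, hb, fun hbx => hab (hax.trans hbx.symm)⟩
    · exact ⟨a, ha, hax⟩
  apply Connected.preconnected
  refine induce_connected_of_patches c ⟨Or.inl hc.1, hc.2⟩ fun {y} hy => ?_
  rcases hy with ⟨hys | hyp, hyx⟩
  · exact ⟨s \ {x}, Set.sdiff_subset_sdiff_left Set.subset_union_left, hc, ⟨hys, hyx⟩,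
      hsx _ _⟩
  obtain ⟨e, he, q, hxq, hqp⟩ := hp.exists_walk_avoiding hyp hyx
  have hes : e ∈ s \ {x} :=
    ⟨he.elim (· ▸ ha) (· ▸ hb), fun hex => hxq (hex ▸ q.start_mem_support)⟩
  refine ⟨s \ {x} ∪ {z | z ∈ q.support}, ?_, Or.inl hc, Or.inr q.end_mem_support,
    (induce_union_connected hsx q.connected_induce_support.preconnected
      ⟨e, hes, q.start_mem_support⟩).preconnected _ _⟩
  rintro z (⟨hzs, hzx⟩ | hzq)
  · exact ⟨Or.inl hzs, hzx⟩
  · exact ⟨Or.inr (hqp hzq), fun hzx => hxq (hzx ▸ hzq)⟩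

lemma IsBlock.support_subset_of_isPath {B : Set V} (hB : IsBlock G B) {a b : V} (ha : a ∈ B)
    (hb : b ∈ B) (hab : a ≠ b) {p : G.Walk a b} (hp : p.IsPath) :
    {z | z ∈ p.support} ⊆ B := by
  have hconn := induce_union_connected hB.1.preconnected
    p.connected_induce_support.preconnected ⟨a, ha, p.start_mem_support⟩
  have hmax := hB.2.2 _ Set.subset_union_left hconn
    (hasNoCutVertex_induce_union_support hB.1.preconnected hB.2.1 ha hb hab hp)
  exact Set.union_subset_iff.1 hmax.le |>.2

lemma exists_adj_walk_of_mem_componentOf {s : Set V} {a v : V}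
    (hv : v ∈ componentOf G (s ∪ {a}) a) (hva : v ≠ a) :
    ∃ w, G.Adj a w ∧ ∃ q : G.Walk w v, ∀ z ∈ q.support, z ∈ s := by
  classical
  obtain ⟨p, hp⟩ := mem_componentOf_iff.1 hv
  obtain ⟨w, h, q, hq⟩ := Walk.exists_eq_cons_of_ne hva.symm p.bypass
  have hpath := p.bypass_isPath
  rw [hq, Walk.cons_isPath_iff] at hpath
  refine ⟨w, h, q, fun z hz => ?_⟩
  have hz' : z ∈ p.bypass.support := by rw [hq]; exact List.mem_cons_of_mem _ hz
  rcases hp z (p.support_bypass_subset_support hz') with hzs | rfl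
  · exact hzs
  · exact absurd hz hpath.2

lemma IsBlock.disjoint_componentOf {B : Set V} (hB : IsBlock G B) {a b : V} (ha : a ∈ B)
    (hb : b ∈ B) (hab : a ≠ b) :
    Disjoint (componentOf G (Bᶜ ∪ {a}) a) (componentOf G (Bᶜ ∪ {b}) b) := by
  classical
  refine Set.disjoint_left.2 fun v hva hvb => ?_
  have hv : v ∉ B := by
    obtain ⟨-, hva' | rfl, -⟩ := hva
    · exact hva'
    obtain ⟨-, hvb' | rfl, -⟩ := hvb
    · exact hvb'
    · exact absurd rfl hab
  obtain ⟨w₁, h₁, t₁, ht₁⟩ := exists_adj_walk_of_mem_componentOf hva fun h => hv (h ▸ ha)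
  obtain ⟨w₂, h₂, t₂, ht₂⟩ := exists_adj_walk_of_mem_componentOf hvb fun h => hv (h ▸ hb)
  set r := (t₁.append t₂.reverse).bypass
  have hr : ∀ z ∈ r.support, z ∉ B := by
    intro z hz
    have hz' := (t₁.append t₂.reverse).support_bypass_subset_support hz
    rcases (Walk.mem_support_append_iff _ _).1 hz' with hz | hz
    · exact ht₁ z hz
    · exact ht₂ z (by simpa using hz)
  have hpath : (Walk.cons h₁ (r.concat h₂.symm)).IsPath := by
    refine (Walk.bypass_isPath _).concat (fun hbr => hr b hbr hb) _ |>.cons ?_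
    rw [Walk.support_concat, List.mem_append, List.mem_singleton]
    exact fun h => h.elim (fun har => hr a har ha) hab
  exact hr w₁ r.start_mem_support (hB.support_subset_of_isPath ha hb hab hpath (by simp))

lemma exists_mem_componentOf_of_walk {s : Set V} {v w : V} (p : G.Walk v w) (hw : w ∈ s) :
    ∃ z ∈ s, v ∈ componentOf G (sᶜ ∪ {z}) z := by
  induction p with
  | nil => exact ⟨_, hw, self_mem_componentOf (Or.inr rfl)⟩
  | @cons v c w h p ih =>
    by_cases hv : v ∈ s
    · exact ⟨v, hv, self_mem_componentOf (Or.inr rfl)⟩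
    obtain ⟨z, hz, hc⟩ := ih hw
    obtain ⟨q, hq⟩ := mem_componentOf_iff.1 hc
    refine ⟨z, hz, mem_componentOf_iff.2 ⟨q.concat h.symm, fun x hx => ?_⟩⟩
    rw [Walk.support_concat, List.mem_append, List.mem_singleton] at hx
    rcases hx with hx | rfl
    · exact hq x hx
    · exact Or.inl hv

lemma hasPerfectMatchingOn_iUnion_sdiff {ι : Type*} {S : ι → Set V}
    (hS : Pairwise (Disjoint on S)) {u : ι → V} (hu : Injective u)
    (hSu : ∀ i j, u j ∈ S i → j = i) (z : ι) (J : Finset ι) (hzJ : z ∉ J)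
    (hJ : ∀ i ∈ J, u i ∈ S i)
    (hroot : ∀ i ∈ insert z (J : Set ι), HasPerfectMatchingOn G (S i \ {u i}))
    (hrest : ∀ i ∉ insert z (J : Set ι), HasPerfectMatchingOn G (S i))
    (hclique : G.IsClique (u '' J)) (heven : Even J.card) :
    HasPerfectMatchingOn G ((⋃ i, S i) \ {u z}) := by
  set X : Set ι := insert z J
  have hpieces : ∀ i, HasPerfectMatchingOn G (S i \ u '' X) := by
    intro i
    by_cases hi : i ∈ X
    · convert hroot i hi using 1
      ext y
      refine and_congr_right fun hy => not_congr ⟨?_, fun hyu => ⟨i, hi, hyu.symm⟩⟩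
      rintro ⟨j, -, rfl⟩
      rw [hSu i j hy]
      rfl
    · convert hrest i hi using 1
      exact sdiff_eq_left.2 <| Set.disjoint_left.2 fun y hy ⟨j, hj, hjy⟩ =>
        hi (hSu i j (hjy ▸ hy) ▸ hj)
  have hunion : (⋃ i, S i) \ {u z} = (⋃ i, S i \ u '' X) ∪ u '' J := by
    rw [← Set.iUnion_sdiff, Set.image_insert_eq]
    ext y
    have hJy : y ∈ u '' J → y ∈ ⋃ i, S i ∧ y ≠ u z := by
      rintro ⟨j, hj, rfl⟩
      exact ⟨Set.mem_iUnion.2 ⟨j, hJ j hj⟩, hu.ne (ne_of_mem_of_not_mem hj hzJ)⟩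
    simp only [Set.mem_sdiff, Set.mem_union, Set.mem_insert_iff, Set.mem_singleton_iff]
    tauto
  rw [hunion]
  refine (hasPerfectMatchingOn_iUnion hpieces fun i j hij =>
    (hS hij).mono Set.sdiff_subset Set.sdiff_subset).union
    (hclique.hasPerfectMatchingOn (J.finite_toSet.image u) ?_) ?_
  · rwa [Set.ncard_image_of_injective _ hu, Set.ncard_coe_finset]
  · exact Set.disjoint_left.2 fun y hy hyJ => by
      obtain ⟨i, hi⟩ := Set.mem_iUnion.1 hy
      exact hi.2 (Set.image_mono (Set.subset_insert _ _) hyJ)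

theorem stmt_13_general {V : Type*} (H : SimpleGraph V) (hH : H.Connected)
    (hbg : IsBlockGraph H) (B : Set V) (hB : IsBlock H B)
    (k : ℕ) (hk : 0 < k) (u : Fin k → V) (huinj : Function.Injective u)
    (hurange : Set.range u = B)
    (G' : Fin k → Set V) (hG' : ∀ i : Fin k, G' i = componentOf H (Bᶜ ∪ {u i}) (u i))
    (S : Fin k → Set V) (hSsub : ∀ i : Fin k, S i ⊆ G' i)
    (hS₁dom : DominatingOn H (G' ⟨0, hk⟩) (S ⟨0, hk⟩))
    (hS₁u : u ⟨0, hk⟩ ∈ S ⟨0, hk⟩)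
    (hS₁pm : HasPerfectMatchingOn H (S ⟨0, hk⟩ \ {u ⟨0, hk⟩}))
    (hSidom : ∀ i : Fin k, i ≠ ⟨0, hk⟩ →
      ∀ v ∈ G' i, v ∉ S i → v ≠ u i → ∃ w ∈ S i, H.Adj v w)
    (J : Finset (Fin k)) (hJ₁ : ⟨0, hk⟩ ∉ J)
    (hJ : ∀ i ∈ J, u i ∈ S i ∧ HasPerfectMatchingOn H (S i \ {u i}))
    (hnJ : ∀ i : Fin k, i ≠ ⟨0, hk⟩ → i ∉ J → HasPerfectMatchingOn H (S i))
    (heven : Even J.card) :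
    Dominating H (⋃ i : Fin k, S i) ∧ u ⟨0, hk⟩ ∈ ⋃ i : Fin k, S i ∧
      HasPerfectMatchingOn H ((⋃ i : Fin k, S i) \ {u ⟨0, hk⟩}) := by
  have huB : ∀ i, u i ∈ B := fun i => hurange ▸ Set.mem_range_self i
  have hdisj : Pairwise (Disjoint on G') := fun i j hij => by
    simp only [onFun, hG']
    exact hB.disjoint_componentOf (huB i) (huB j) (huinj.ne hij)
  have hcover : ∀ v, ∃ i, v ∈ G' i := fun v => by
    obtain ⟨w, hw, hv⟩ :=
      exists_mem_componentOf_of_walk (hH.preconnected v (u ⟨0, hk⟩)).some (huB _)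
    obtain ⟨i, rfl⟩ := hurange.symm ▸ hw
    exact ⟨i, (hG' i).symm ▸ hv⟩
  have huG' : ∀ i, u i ∈ G' i := fun i => (hG' i).symm ▸ self_mem_componentOf (Or.inr rfl)
  have hSu : ∀ i j, u j ∈ S i → j = i := fun i j huj =>
    by_contra fun hji => Set.disjoint_left.1 (hdisj hji) (huG' j) (hSsub i huj)
  refine ⟨fun v hv => ?_, Set.mem_iUnion.2 ⟨_, hS₁u⟩,
    hasPerfectMatchingOn_iUnion_sdiff (fun i j hij => (hdisj hij).mono (hSsub i) (hSsub j)) huinj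
      hSu _ J hJ₁ (fun i hi => (hJ i hi).1) ?_ ?_
      ((hbg B hB).mono (hurange ▸ Set.image_subset_range u _)) heven⟩
  · obtain ⟨i, hvi⟩ := hcover v
    have hvS : ∀ j, v ∉ S j := fun j hvj => hv (Set.mem_iUnion.2 ⟨j, hvj⟩)
    suffices ∃ j, ∃ w ∈ S j, H.Adj v w by
      obtain ⟨j, w, hw, hvw⟩ := this
      exact ⟨w, Set.mem_iUnion.2 ⟨j, hw⟩, hvw⟩
    by_cases hiz : i = ⟨0, hk⟩
    · subst hiz
      exact ⟨_, hS₁dom v hvi (hvS _)⟩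
    by_cases hvu : v = u i
    · exact ⟨_, _, hS₁u, hvu ▸ hbg B hB (huB i) (huB _) (huinj.ne hiz)⟩
    · exact ⟨i, hSidom i hiz v hvi (hvS i) hvu⟩
  · rintro i (rfl | hi)
    · exact hS₁pm
    · exact (hJ i hi).2
  · intro i hi
    simp only [Set.mem_insert_iff, Finset.mem_coe, not_or] at hi
    exact hnJ i hi.1 hi.2

theorem stmt_13 {V : Type*} [Fintype V] (H : SimpleGraph V) (hH : H.Connected)
    (hbg : IsBlockGraph H) (B : Set V) (hB : IsBlock H B)
    (k : ℕ) (hk : 0 < k) (u : Fin k → V) (huinj : Function.Injective u)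
    (hurange : Set.range u = B)
    (G' : Fin k → Set V) (hG' : ∀ i : Fin k, G' i = componentOf H (Bᶜ ∪ {u i}) (u i))
    (S : Fin k → Set V) (hSsub : ∀ i : Fin k, S i ⊆ G' i)
    (hS₁dom : DominatingOn H (G' ⟨0, hk⟩) (S ⟨0, hk⟩))
    (hS₁u : u ⟨0, hk⟩ ∈ S ⟨0, hk⟩)
    (hS₁pm : HasPerfectMatchingOn H (S ⟨0, hk⟩ \ {u ⟨0, hk⟩}))
    (hSidom : ∀ i : Fin k, i ≠ ⟨0, hk⟩ →
      ∀ v ∈ G' i, v ∉ S i → v ≠ u i → ∃ w ∈ S i, H.Adj v w)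
    (J : Finset (Fin k)) (hJ₁ : ⟨0, hk⟩ ∉ J)
    (hJ : ∀ i ∈ J, u i ∈ S i ∧ HasPerfectMatchingOn H (S i \ {u i}))
    (hnJ : ∀ i : Fin k, i ≠ ⟨0, hk⟩ → i ∉ J → HasPerfectMatchingOn H (S i))
    (heven : Even J.card) :
    Dominating H (⋃ i : Fin k, S i) ∧ u ⟨0, hk⟩ ∈ ⋃ i : Fin k, S i ∧
      HasPerfectMatchingOn H ((⋃ i : Fin k, S i) \ {u ⟨0, hk⟩}) :=
  stmt_13_general H hH hbg B hB k hk u huinj hurange G' hG' S hSsub hS₁dom hS₁u hS₁pm hSidom J hJ₁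
    hJ hnJ heven
end
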